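/- arXiv:1308.0903 — 2 statements merged into one kernel-verified Lean document; each statement's English description precedes it below -/
import Mathlib

section
/- Every complex linear hyperplane of ℂ³ intersects 𝔄 ∖ {0}; that is, for every nonzero complex linear functional L on ℂ³ there exists z ∈ ℂ³ with z ≠ 0, L(z) = 0, and z₁² + z₂² + z₃² = 0. -/
/-! By rank–nullity the hyperplane `ker L` has dimension at least two, and a quadratic form on
such a space over an algebraically closed field has a nonzero zero: if `u, v` are independent
and `Q u ≠ 0`, then `x ↦ Q (x • u + v)` is a genuine quadratic polynomial in `x`, so it has a
root, and `x • u + v ≠ 0`. -/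

open Module Polynomial LinearMap

theorem IsAlgClosed.exists_quadratic_eq_zero {K : Type*} [Field K] [IsAlgClosed K] {a : K}
    (ha : a ≠ 0) (b c : K) : ∃ x, a * (x * x) + b * x + c = 0 := by
  obtain ⟨x, hx⟩ := IsAlgClosed.exists_root (C a * X ^ 2 + C b * X + C c)
    (by rw [degree_quadratic ha]; decide)
  exact ⟨x, by simpa [_root_.sq] using hx⟩

theorem QuadraticMap.apply_smul_add {R M N : Type*} [CommRing R] [AddCommGroup M] [Module R M]
    [AddCommGroup N] [Module R N] (Q : QuadraticMap R M N) (x : R) (u v : M) :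
    Q (x • u + v) = (x * x) • Q u + x • polar Q u v + Q v := by
  rw [QuadraticMap.map_add Q, Q.map_smul, polar_smul_left]
  abel

theorem QuadraticForm.not_anisotropic_of_one_lt_finrank {K V : Type*} [Field K] [IsAlgClosed K]
    [AddCommGroup V] [Module K V] (Q : QuadraticForm K V) (h : 1 < finrank K V) :
    ¬Q.Anisotropic := by
  rw [QuadraticMap.not_anisotropic_iff_exists]
  have : Nontrivial V := nontrivial_of_finrank_pos (one_pos.trans h)
  obtain ⟨u, hu⟩ := exists_ne (0 : V)
  by_cases hQu : Q u = 0
  · exact ⟨u, hu, hQu⟩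
  obtain ⟨v, huv⟩ := exists_linearIndependent_pair_of_one_lt_finrank h hu
  obtain ⟨x, hx⟩ := IsAlgClosed.exists_quadratic_eq_zero hQu (QuadraticMap.polar Q u v) (Q v)
  refine ⟨x • u + v, fun h0 => ?_, ?_⟩
  · exact one_ne_zero (LinearIndependent.pair_iff.mp huv x 1 (by rwa [one_smul])).2
  · rw [Q.apply_smul_add, smul_eq_mul, smul_eq_mul, ← hx]
    ring

theorem LinearMap.finrank_le_finrank_ker_add_one {K V : Type*} [Field K] [AddCommGroup V]
    [Module K V] [FiniteDimensional K V] (L : V →ₗ[K] K) :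
    finrank K V ≤ finrank K (ker L) + 1 := by
  have hrank := L.finrank_range_add_finrank_ker
  have hrange := (range L).finrank_le
  rw [finrank_self] at hrange
  omega

theorem hyperplane_meets_null_quadric_general (L : (ℂ × ℂ × ℂ) →ₗ[ℂ] ℂ) :
    ∃ z : ℂ × ℂ × ℂ, z ≠ 0 ∧ L z = 0 ∧ z.1 ^ 2 + z.2.1 ^ 2 + z.2.2 ^ 2 = 0 := by
  let Q : QuadraticForm ℂ (ℂ × ℂ × ℂ) :=
    QuadraticMap.sq.prod (QuadraticMap.sq.prod QuadraticMap.sq)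
  have hker : 1 < finrank ℂ (ker L) := by
    have := L.finrank_le_finrank_ker_add_one
    simp only [finrank_prod, finrank_self] at this
    omega
  have hQ := QuadraticForm.not_anisotropic_of_one_lt_finrank (Q.comp (ker L).subtype) hker
  obtain ⟨⟨z, hLz⟩, hz, hQz⟩ := (QuadraticMap.not_anisotropic_iff_exists _).mp hQ
  refine ⟨z, by simpa using hz, hLz, ?_⟩
  simpa [Q, _root_.sq, add_assoc] using hQz

theorem hyperplane_meets_null_quadric (L : (ℂ × ℂ × ℂ) →ₗ[ℂ] ℂ) (hL : L ≠ 0) :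
    ∃ z : ℂ × ℂ × ℂ, z ≠ 0 ∧ L z = 0 ∧ z.1 ^ 2 + z.2.1 ^ 2 + z.2.2 ^ 2 = 0 :=
  hyperplane_meets_null_quadric_general L
end

section
/- The map 𝒯(z₁,z₂,z₃) = (1/z₃)·[[1, z₁+iz₂],[z₁−iz₂, z₁²+z₂²+z₃²]] is a bijection from {z ∈ ℂ³ : z₃ ≠ 0} onto {A ∈ SL₂(ℂ) : A₁₁ ≠ 0}. -/
/-!
In the null coordinates `u = z₁ + i z₂`, `v = z₁ - i z₂` one has `z₁² + z₂² = u v`, so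
`𝒯 z = z₃⁻¹ • !![1, u; v, u v + z₃²]`. This is a matrix of determinant one with nonzero corner
entry `z₃⁻¹`, and any such matrix `A` arises from exactly one triple, namely
`u = A₀₁ / A₀₀`, `v = A₁₀ / A₀₀`, `z₃ = A₀₀⁻¹`; the relation `A₁₁ = (1 + A₀₁ A₁₀) / A₀₀` forced by
the determinant is what makes the last entry match. Since `(z₁, z₂) ↦ (u, v)` is invertible, `𝒯`
is a bijection.
-/

open Matrix

variable {K : Type*} [Field K]

def sl2Chart (p : K × K × K) : Matrix (Fin 2) (Fin 2) K :=
  p.2.2⁻¹ • !![1, p.1; p.2.1, p.1 * p.2.1 + p.2.2 ^ 2]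

def sl2ChartInv (A : Matrix (Fin 2) (Fin 2) K) : K × K × K :=
  (A 0 1 / A 0 0, A 1 0 / A 0 0, (A 0 0)⁻¹)

theorem det_sl2Chart {p : K × K × K} (hp : p.2.2 ≠ 0) : (sl2Chart p).det = 1 := by
  rw [sl2Chart, det_smul, det_fin_two_of, Fintype.card_fin]
  field_simp
  ring

theorem sl2ChartInv_sl2Chart {p : K × K × K} (hp : p.2.2 ≠ 0) :
    sl2ChartInv (sl2Chart p) = p := by
  obtain ⟨u, v, t⟩ := p
  simp only at hp
  simp [sl2ChartInv, sl2Chart, mul_comm t⁻¹, hp]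

theorem sl2Chart_sl2ChartInv {A : Matrix (Fin 2) (Fin 2) K} (hdet : A.det = 1) (hA : A 0 0 ≠ 0) :
    sl2Chart (sl2ChartInv A) = A := by
  rw [det_fin_two] at hdet
  ext i j
  fin_cases i <;> fin_cases j <;> simp [sl2Chart, sl2ChartInv]
  · field_simp
  · field_simp
  · field_simp
    linear_combination -hdet

theorem bijOn_sl2Chart :
    Set.BijOn (sl2Chart (K := K)) {p | p.2.2 ≠ 0} {A | A.det = 1 ∧ A 0 0 ≠ 0} := by
  refine Set.InvOn.bijOn (f' := sl2ChartInv)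
    ⟨fun p hp ↦ sl2ChartInv_sl2Chart hp, fun A hA ↦ sl2Chart_sl2ChartInv hA.1 hA.2⟩ ?_ ?_
  · intro p hp
    exact ⟨det_sl2Chart hp, by simpa [sl2Chart] using hp⟩
  · intro A hA
    simpa [sl2ChartInv] using hA.2

def nullCoords (i : K) (z : K × K × K) : K × K × K :=
  (z.1 + i * z.2.1, z.1 - i * z.2.1, z.2.2)

def nullCoordsInv (i : K) (p : K × K × K) : K × K × K :=
  ((p.1 + p.2.1) / 2, (p.1 - p.2.1) / (2 * i), p.2.2)

theorem bijOn_nullCoords {i : K} (hi : i ^ 2 = -1) (h2 : (2 : K) ≠ 0) :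
    Set.BijOn (nullCoords i) {z | z.2.2 ≠ 0} {p | p.2.2 ≠ 0} := by
  have hi0 : i ≠ 0 := by
    rintro rfl
    simp at hi
  refine Set.InvOn.bijOn (f' := nullCoordsInv i)
    ⟨fun z _ ↦ ?_, fun p _ ↦ ?_⟩ (fun _ h ↦ h) (fun _ h ↦ h) <;>
  refine Prod.ext ?_ (Prod.ext ?_ rfl) <;>
  simp only [nullCoords, nullCoordsInv] <;> field_simp <;> ring

theorem sl2Chart_nullCoords {i : K} (hi : i ^ 2 = -1) (z : K × K × K) :
    sl2Chart (nullCoords i z) =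
      z.2.2⁻¹ • !![1, z.1 + i * z.2.1; z.1 - i * z.2.1, z.1 ^ 2 + z.2.1 ^ 2 + z.2.2 ^ 2] := by
  have hsum : (z.1 + i * z.2.1) * (z.1 - i * z.2.1) = z.1 ^ 2 + z.2.1 ^ 2 := by
    linear_combination (-z.2.1 ^ 2) * hi
  simp only [sl2Chart, nullCoords, hsum]

theorem T_bijection :
    Set.BijOn
      (fun z : ℂ × ℂ × ℂ =>
        (z.2.2)⁻¹ • !![1, z.1 + Complex.I * z.2.1;
                       z.1 - Complex.I * z.2.1, z.1 ^ 2 + z.2.1 ^ 2 + z.2.2 ^ 2])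
      {z : ℂ × ℂ × ℂ | z.2.2 ≠ 0}
      {A : Matrix (Fin 2) (Fin 2) ℂ | A.det = 1 ∧ A 0 0 ≠ 0} := by
  convert bijOn_sl2Chart.comp (bijOn_nullCoords Complex.I_sq two_ne_zero) using 1
  exact funext fun z ↦ (sl2Chart_nullCoords Complex.I_sq z).symm
end
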